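/- arXiv:2109.01358 — 4 statements merged into one kernel-verified Lean document; each statement's English description precedes it below -/
import Mathlib

section
/- Let A be an n×n real matrix, B₂ an n×1 real matrix, C₂ a p×n real matrix, Â an m×m real matrix, Ĉ a 1×m real matrix, B̂₂ an m×1 real matrix, and D̂₂ ∈ ℝ. Define Ā = [[A, B₂Ĉ],[0, Â]], B̄₂ = [[B₂D̂₂],[B̂₂]], and C̄₂ = [C₂, 0]. Then for every i ≥ 0, C̄₂ĀⁱB̄₂ = C₂AⁱB₂·D̂₂ + Σ_{j=1}^{i} C₂A^{i−j}B₂·ĈÂ^{j−1}B̂₂. Consequently, if r₂ ≥ 1 is such that C₂AⁱB₂ = 0 for all 0 ≤ i ≤ r₂−2 and C₂A^{r₂−1}B₂ ≠ 0, and D̂₂ ≠ 0, then C̄₂ĀⁱB̄₂ = 0 for all 0 ≤ i ≤ r₂−2 and C̄₂Ā^{r₂−1}B̄₂ = C₂A^{r₂−1}B₂·D̂₂ ≠ 0; that is, the relative degree of (Ā, B̄₂, C̄₂) equals the relative degree r₂ of (A, B₂, C₂). -/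
/-!
`Ā` is block upper triangular, so `Āⁱ` has diagonal blocks `Aⁱ`, `Âⁱ` and off-diagonal block
`∑_{k<i} A^{i-1-k} (B₂Ĉ) Â^k`; since `C̄₂ = [C₂, 0]`, only the first block row of `Āⁱ` survives,
which gives the formula. For `i ≤ r₂ - 1` every summand contains a Markov parameter
`C₂ A^{i-j} B₂` with `i - j ≤ r₂ - 2`, hence vanishes, leaving `D̂₂ • C₂ Aⁱ B₂`.
-/

open Finset Matrix

theorem Finset.sum_Icc_one_eq_sum_range {M : Type*} [AddCommMonoid M] (f : ℕ → M) (i : ℕ) :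
    ∑ j ∈ Icc 1 i, f j = ∑ k ∈ range i, f (k + 1) := by
  rw [← Ico_add_one_right_eq_Icc, sum_Ico_eq_sum_range]
  simp [add_comm]

namespace Matrix

variable {l n m o R : Type*} [Fintype n] [Fintype m] [DecidableEq n] [DecidableEq m] [Semiring R]

theorem fromBlocks_zero₂₁_pow (A : Matrix n n R) (K : Matrix n m R) (D : Matrix m m R) (i : ℕ) :
    fromBlocks A K 0 D ^ i =
      fromBlocks (A ^ i) (∑ k ∈ range i, A ^ (i - 1 - k) * K * D ^ k) 0 (D ^ i) := by
  induction i with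
  | zero => simp [fromBlocks_one]
  | succ i ih =>
    have hterm : ∀ k ∈ range i, A * (A ^ (i - 1 - k) * K * D ^ k) = A ^ (i - k) * K * D ^ k := by
      intro k hk
      have : i - 1 - k + 1 = i - k := by grind
      rw [← Matrix.mul_assoc, ← Matrix.mul_assoc, ← pow_succ', this]
    rw [pow_succ', ih, fromBlocks_multiply, Matrix.mul_sum, sum_congr rfl hterm, sum_range_succ]
    simp [pow_succ']

theorem fromCols_zero_mul_fromBlocks_pow_mul_fromRows [Fintype l] [Fintype o]
    (C : Matrix l n R) (A : Matrix n n R) (K : Matrix n m R) (D : Matrix m m R)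
    (B₁ : Matrix n o R) (B₂ : Matrix m o R) (i : ℕ) :
    fromCols C (0 : Matrix l m R) * fromBlocks A K 0 D ^ i * fromRows B₁ B₂ =
      C * A ^ i * B₁ + ∑ k ∈ range i, C * A ^ (i - 1 - k) * K * D ^ k * B₂ := by
  rw [fromBlocks_zero₂₁_pow, fromCols_mul_fromBlocks, fromCols_mul_fromRows]
  simp [Matrix.mul_sum, Matrix.sum_mul, Matrix.mul_assoc]

end Matrix

section Cascade

variable {l n m o R : Type*} [Fintype l] [Fintype n] [Fintype m] [Fintype o]
  [DecidableEq n] [DecidableEq m] [CommSemiring R]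
  (C : Matrix l n R) (A : Matrix n n R) (B : Matrix n o R)
  (Ahat : Matrix m m R) (Chat : Matrix o m R) (Bhat : Matrix m o R) (d : R)

theorem cascade_markov_eq (i : ℕ) :
    fromCols C (0 : Matrix l m R) * fromBlocks A (B * Chat) 0 Ahat ^ i * fromRows (d • B) Bhat =
      d • (C * A ^ i * B) + ∑ j ∈ Icc 1 i, C * A ^ (i - j) * B * (Chat * Ahat ^ (j - 1) * Bhat) := by
  rw [fromCols_zero_mul_fromBlocks_pow_mul_fromRows, sum_Icc_one_eq_sum_range, Matrix.mul_smul]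
  simp only [Nat.sub_sub, Nat.add_comm 1, add_tsub_cancel_right, Matrix.mul_assoc]

theorem cascade_markov_eq_of_lt {r : ℕ} (hzero : ∀ i, i + 2 ≤ r → C * A ^ i * B = 0) {i : ℕ}
    (hi : i < r) :
    fromCols C (0 : Matrix l m R) * fromBlocks A (B * Chat) 0 Ahat ^ i * fromRows (d • B) Bhat =
      d • (C * A ^ i * B) := by
  rw [cascade_markov_eq, sum_eq_zero, add_zero]
  intro j hj
  rw [hzero (i - j) (by grind), Matrix.zero_mul]

end Cascade

/-- Relative-degree computation of Appendix D: for the augmented matrices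
`Ā = [[A,B₂Ĉ],[0,Â]]`, `B̄₂ = [[B₂D̂₂],[B̂₂]]`, `C̄₂ = [C₂,0]` one has
`C̄₂ĀⁱB̄₂ = C₂AⁱB₂·D̂₂ + ∑_{j=1}^{i} C₂A^{i−j}B₂·ĈÂ^{j−1}B̂₂`; consequently, if
`(A,B₂,C₂)` has relative degree `r₂` and `D̂₂ ≠ 0`, so does `(Ā,B̄₂,C̄₂)`. -/
theorem stmt_9 (n m p : ℕ)
    (A : Matrix (Fin n) (Fin n) ℝ) (B₂ : Matrix (Fin n) (Fin 1) ℝ)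
    (C₂ : Matrix (Fin p) (Fin n) ℝ)
    (Ahat : Matrix (Fin m) (Fin m) ℝ) (Chat : Matrix (Fin 1) (Fin m) ℝ)
    (B2hat : Matrix (Fin m) (Fin 1) ℝ) (D2hat : ℝ)
    (Abar : Matrix (Fin n ⊕ Fin m) (Fin n ⊕ Fin m) ℝ)
    (hAbar : Abar = Matrix.fromBlocks A (B₂ * Chat) 0 Ahat)
    (B2bar : Matrix (Fin n ⊕ Fin m) (Fin 1) ℝ)
    (hB2bar : B2bar = Matrix.fromRows (D2hat • B₂) B2hat)
    (C2bar : Matrix (Fin p) (Fin n ⊕ Fin m) ℝ)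
    (hC2bar : C2bar = Matrix.fromCols C₂ 0) :
    (∀ i : ℕ,
      C2bar * Abar ^ i * B2bar
        = D2hat • (C₂ * A ^ i * B₂)
          + ∑ j ∈ Finset.Icc 1 i,
              C₂ * A ^ (i - j) * B₂ * (Chat * Ahat ^ (j - 1) * B2hat)) ∧
    (∀ r₂ : ℕ, 1 ≤ r₂ →
      (∀ i : ℕ, i + 2 ≤ r₂ → C₂ * A ^ i * B₂ = 0) →
      C₂ * A ^ (r₂ - 1) * B₂ ≠ 0 → D2hat ≠ 0 →
      (∀ i : ℕ, i + 2 ≤ r₂ → C2bar * Abar ^ i * B2bar = 0) ∧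
      C2bar * Abar ^ (r₂ - 1) * B2bar = D2hat • (C₂ * A ^ (r₂ - 1) * B₂) ∧
      C2bar * Abar ^ (r₂ - 1) * B2bar ≠ 0) := by
  subst hAbar hB2bar hC2bar
  refine ⟨cascade_markov_eq C₂ A B₂ Ahat Chat B2hat D2hat, fun r₂ _ hzero hnz hD => ?_⟩
  have hlow := fun i (hi : i < r₂) => cascade_markov_eq_of_lt C₂ A B₂ Ahat Chat B2hat D2hat hzero hi
  have htop := hlow (r₂ - 1) (by omega)
  refine ⟨fun i hi => ?_, htop, ?_⟩
  · rw [hlow i (by omega), hzero i hi, smul_zero]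
  · rw [htop]
    exact smul_ne_zero hD hnz
end

section
/- Let Ā be an N×N real matrix, b₁ and b₂ vectors in ℝ^N (N×1 matrices), C̄₂ a p×N real matrix, r₁, r₂ ≥ 1 integers, and s₁, s₂ real scalars. Assume C̄₂Āⁱb₁ = 0 for all 0 ≤ i ≤ r₁−2 and C̄₂Āⁱb₂ = 0 for all 0 ≤ i ≤ r₂−2. Define Y := s₁·Σ_{i=0}^{r₁−1} Āⁱb₁b₁ᵀ(Āᵀ)ⁱ + s₂·Σ_{i=0}^{r₂−1} Āⁱb₂b₂ᵀ(Āᵀ)ⁱ and the N×2 matrix Ψ̄ := [Ā^{r₁−1}b₁, Ā^{r₂−1}b₂]. Then Y·C̄₂ᵀ = Ψ̄·diag(s₁,s₂)·Ψ̄ᵀ·C̄₂ᵀ. -/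
open Matrix

/- Each summand of `Y` has the form `(Āⁱb)(Āⁱb)ᵀ`, and `(Āⁱb)ᵀC̄₂ᵀ = (C̄₂Āⁱb)ᵀ` vanishes for every
`i` below the relative degree minus one; so after multiplying by `C̄₂ᵀ` only the top term
`(Ā^{r-1}b)(Ā^{r-1}b)ᵀ` of each sum survives, and `Ψ̄ diag(s₁,s₂) Ψ̄ᵀ` is exactly the weighted sum
of these two top terms. -/

section

variable {n m p R : Type*} [Fintype n] [DecidableEq n] [Fintype m] [CommRing R]

theorem pow_mul_mul_transpose_mul_transpose_pow_mul_transpose_eq_zero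
    {A : Matrix n n R} {b : Matrix n m R} {C : Matrix p n R} {i : ℕ} (h : C * A ^ i * b = 0) :
    A ^ i * b * bᵀ * Aᵀ ^ i * Cᵀ = 0 := by
  have hT : bᵀ * Aᵀ ^ i * Cᵀ = 0 := by
    simpa only [transpose_mul, transpose_pow, transpose_zero, Matrix.mul_assoc]
      using congrArg transpose h
  rw [Matrix.mul_assoc (A ^ i * b), Matrix.mul_assoc (A ^ i * b), hT, Matrix.mul_zero]

theorem sum_range_succ_pow_mul_mul_transpose_mul_transpose_pow_mul_transpose
    (A : Matrix n n R) (b : Matrix n m R) (C : Matrix p n R) (k : ℕ)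
    (h : ∀ i < k, C * A ^ i * b = 0) :
    (∑ i ∈ Finset.range (k + 1), A ^ i * b * bᵀ * Aᵀ ^ i) * Cᵀ
      = A ^ k * b * (A ^ k * b)ᵀ * Cᵀ := by
  rw [Finset.sum_range_succ, Matrix.add_mul, Matrix.sum_mul,
    Finset.sum_eq_zero fun i hi =>
      pow_mul_mul_transpose_mul_transpose_pow_mul_transpose_eq_zero (h i (Finset.mem_range.mp hi)),
    zero_add, transpose_mul, transpose_pow, Matrix.mul_assoc (A ^ k * b)]

end

theorem fromCols_mul_fromBlocks_smul_one_mul_transpose {n m₁ m₂ R : Type*}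
    [Fintype m₁] [Fintype m₂] [DecidableEq m₁] [DecidableEq m₂] [CommRing R]
    (u : Matrix n m₁ R) (v : Matrix n m₂ R) (s₁ s₂ : R) :
    fromCols u v * fromBlocks (s₁ • (1 : Matrix m₁ m₁ R)) 0 0 (s₂ • (1 : Matrix m₂ m₂ R))
        * (fromCols u v)ᵀ
      = s₁ • (u * uᵀ) + s₂ • (v * vᵀ) := by
  rw [transpose_fromCols, fromCols_mul_fromBlocks, fromCols_mul_fromRows]
  simp only [Matrix.mul_zero, add_zero, zero_add, Matrix.mul_smul,
    Matrix.smul_mul, Matrix.mul_one]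

/-- Decoupling identity of Appendix D: with
`Y = s₁ ∑_{i<r₁} Āⁱb₁b₁ᵀ(Āᵀ)ⁱ + s₂ ∑_{i<r₂} Āⁱb₂b₂ᵀ(Āᵀ)ⁱ` and
`Ψ̄ = [Ā^{r₁−1}b₁, Ā^{r₂−1}b₂]`, under the relative-degree conditions one has
`Y C̄₂ᵀ = Ψ̄ diag(s₁,s₂) Ψ̄ᵀ C̄₂ᵀ`. -/
theorem stmt_11 (N p : ℕ)
    (Abar : Matrix (Fin N) (Fin N) ℝ) (b₁ b₂ : Matrix (Fin N) (Fin 1) ℝ)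
    (C₂ : Matrix (Fin p) (Fin N) ℝ)
    (r₁ r₂ : ℕ) (hr₁ : 1 ≤ r₁) (hr₂ : 1 ≤ r₂) (s₁ s₂ : ℝ)
    (h1 : ∀ i : ℕ, i + 2 ≤ r₁ → C₂ * Abar ^ i * b₁ = 0)
    (h2 : ∀ i : ℕ, i + 2 ≤ r₂ → C₂ * Abar ^ i * b₂ = 0)
    (Y : Matrix (Fin N) (Fin N) ℝ)
    (hY : Y = s₁ • (∑ i ∈ Finset.range r₁, Abar ^ i * b₁ * b₁ᵀ * (Abarᵀ) ^ i)
            + s₂ • (∑ i ∈ Finset.range r₂, Abar ^ i * b₂ * b₂ᵀ * (Abarᵀ) ^ i))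
    (Ψbar : Matrix (Fin N) (Fin 1 ⊕ Fin 1) ℝ)
    (hΨbar : Ψbar = Matrix.fromCols (Abar ^ (r₁ - 1) * b₁) (Abar ^ (r₂ - 1) * b₂)) :
    Y * C₂ᵀ
      = Ψbar * Matrix.fromBlocks (s₁ • (1 : Matrix (Fin 1) (Fin 1) ℝ)) 0 0
          (s₂ • (1 : Matrix (Fin 1) (Fin 1) ℝ)) * Ψbarᵀ * C₂ᵀ := by
  obtain ⟨k₁, rfl⟩ := Nat.exists_eq_add_of_le' hr₁
  obtain ⟨k₂, rfl⟩ := Nat.exists_eq_add_of_le' hr₂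
  subst hY hΨbar
  rw [fromCols_mul_fromBlocks_smul_one_mul_transpose, Matrix.add_mul, Matrix.add_mul,
    Matrix.smul_mul, Matrix.smul_mul, Matrix.smul_mul, Matrix.smul_mul,
    sum_range_succ_pow_mul_mul_transpose_mul_transpose_pow_mul_transpose _ _ _ _
      fun i hi => h1 i (by omega),
    sum_range_succ_pow_mul_mul_transpose_mul_transpose_pow_mul_transpose _ _ _ _
      fun i hi => h2 i (by omega)]
  simp only [Nat.add_sub_cancel, Matrix.mul_assoc]
end

section
/- Let A be an n×n real matrix, b ∈ ℝⁿ, μ₀ ∈ (0,1], and let X be an n×n real symmetric positive semidefinite matrix satisfying the modified algebraic Riccati equation X = AᵀXA − μ₀·(1 + bᵀXb)⁻¹·(AᵀXb)(bᵀXA). Define β := μ₀⁻¹ + (μ₀⁻¹ − 1)·bᵀXb. Then β ≥ 1, and the matrix X_β := β⁻¹X satisfies the standard algebraic Riccati equation X_β = AᵀX_βA − (1 + bᵀX_βb)⁻¹·(AᵀX_βb)(bᵀX_βA). Moreover, if e := 1 − μ₀, M is a real number with e·M² < 1, and bᵀX_βb = M² − 1, then bᵀXb = (M² − 1)/(1 −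 e·M²). -/
/-!
With `s = bᵀXb`, the choice of `β` is exactly the one for which `β + s = μ₀⁻¹(1 + s)`. Hence
`(1 + bᵀX_βb)⁻¹ β⁻² = β⁻¹ (β + s)⁻¹ = β⁻¹ μ₀ (1 + s)⁻¹`, so dividing the modified Riccati
equation by `β` gives the standard one for `X_β`. Since `X ⪰ 0` we have `s ≥ 0`, whence `β ≥ 1`;
and `bᵀX_βb = s / β = M² − 1` is a linear equation in `s` with leading coefficient `1 − eM²`.
-/

open Matrix

namespace Matrix

variable {K : Type*} [Field K] {n : Type*} [Fintype n]

lemma transpose_mul_smul_mul_apply (b : Matrix n (Fin 1) K) (c : K) (X : Matrix n n K) :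
    (bᵀ * (c • X) * b) 0 0 = c * (bᵀ * X * b) 0 0 := by
  simp only [Matrix.mul_smul, Matrix.smul_mul, smul_apply, smul_eq_mul]

theorem inv_smul_dare_of_modified_dare (A X : Matrix n n K) (b : Matrix n (Fin 1) K) (μ β : K)
    (hric : X = Aᵀ * X * A
      - (μ * (1 + (bᵀ * X * b) 0 0)⁻¹) • (Aᵀ * X * b * (bᵀ * X * A)))
    (hβ : β = μ⁻¹ + (μ⁻¹ - 1) * (bᵀ * X * b) 0 0) :
    β⁻¹ • X = Aᵀ * (β⁻¹ • X) * A
      - (1 + (bᵀ * (β⁻¹ • X) * b) 0 0)⁻¹ • (Aᵀ * (β⁻¹ • X) * b * (bᵀ * (β⁻¹ • X) * A)) := by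
  set s := (bᵀ * X * b) 0 0
  have hgain : β⁻¹ * ((1 + β⁻¹ * s)⁻¹ * β⁻¹) = β⁻¹ * (μ * (1 + s)⁻¹) := by
    rcases eq_or_ne β 0 with hβ0 | hβ0
    · simp [hβ0]
    · have hβs : (1 + β⁻¹ * s) * β = μ⁻¹ * (1 + s) := by
        rw [add_mul, one_mul, mul_right_comm, inv_mul_cancel₀ hβ0, one_mul, hβ]; ring
      rw [← mul_inv, hβs, mul_inv, inv_inv]
  rw [transpose_mul_smul_mul_apply]
  nth_rewrite 1 [hric]
  simp only [Matrix.mul_smul, Matrix.smul_mul, smul_smul, smul_sub]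
  rw [mul_left_comm _ β⁻¹, hgain]

end Matrix

lemma one_le_inv_add_inv_sub_one_mul {μ s : ℝ} (hμ₀ : 0 < μ) (hμ₁ : μ ≤ 1) (hs : 0 ≤ s) :
    1 ≤ μ⁻¹ + (μ⁻¹ - 1) * s := by
  have hμinv : 1 ≤ μ⁻¹ := (one_le_inv₀ hμ₀).2 hμ₁
  nlinarith

lemma eq_div_of_eq_inv_add_inv_sub_one_mul_mul {μ s M : ℝ} (hμ : μ ≠ 0)
    (hM : (1 - μ) * M ^ 2 < 1) (hs : s = (μ⁻¹ + (μ⁻¹ - 1) * s) * (M ^ 2 - 1)) :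
    s = (M ^ 2 - 1) / (1 - (1 - μ) * M ^ 2) := by
  rw [eq_div_iff (sub_pos.2 hM).ne']
  field_simp at hs
  linear_combination hs

/-- Rescaling argument in the proof of Corollary 1: if `X ⪰ 0` solves the modified
algebraic Riccati equation `X = AᵀXA − μ₀(1+bᵀXb)⁻¹(AᵀXb)(bᵀXA)` with `μ₀ ∈ (0,1]`, then
`β = μ₀⁻¹ + (μ₀⁻¹−1)bᵀXb ≥ 1`, `X_β = β⁻¹X` solves the standard DARE, and if moreover
`e = 1−μ₀`, `eM² < 1` and `bᵀX_βb = M²−1`, then `bᵀXb = (M²−1)/(1−eM²)`. -/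
theorem stmt_14 (n : ℕ)
    (A : Matrix (Fin n) (Fin n) ℝ) (b : Matrix (Fin n) (Fin 1) ℝ)
    (μ₀ : ℝ) (hμ₀ : 0 < μ₀) (hμ₁ : μ₀ ≤ 1)
    (X : Matrix (Fin n) (Fin n) ℝ) (hX : X.PosSemidef)
    (hric : X = Aᵀ * X * A
      - (μ₀ * (1 + (bᵀ * X * b) 0 0)⁻¹) • (Aᵀ * X * b * (bᵀ * X * A)))
    (β : ℝ) (hβ : β = μ₀⁻¹ + (μ₀⁻¹ - 1) * (bᵀ * X * b) 0 0)
    (Xβ : Matrix (Fin n) (Fin n) ℝ) (hXβ : Xβ = β⁻¹ • X) :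
    1 ≤ β ∧
    Xβ = Aᵀ * Xβ * A
      - (1 + (bᵀ * Xβ * b) 0 0)⁻¹ • (Aᵀ * Xβ * b * (bᵀ * Xβ * A)) ∧
    (∀ e M : ℝ, e = 1 - μ₀ → e * M ^ 2 < 1 → (bᵀ * Xβ * b) 0 0 = M ^ 2 - 1 →
      (bᵀ * X * b) 0 0 = (M ^ 2 - 1) / (1 - e * M ^ 2)) := by
  have hs : 0 ≤ (bᵀ * X * b) 0 0 := by
    simpa using (hX.conjTranspose_mul_mul_same b).diag_nonneg (i := 0)
  have hβ1 : 1 ≤ β := hβ ▸ one_le_inv_add_inv_sub_one_mul hμ₀ hμ₁ hs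
  subst hXβ
  refine ⟨hβ1, inv_smul_dare_of_modified_dare A X b μ₀ β hric hβ, ?_⟩
  rintro e M rfl hM hMs
  rw [transpose_mul_smul_mul_apply, inv_mul_eq_iff_eq_mul₀ (by positivity)] at hMs
  exact eq_div_of_eq_inv_add_inv_sub_one_mul_mul hμ₀.ne' hM (hβ ▸ hMs)
end

section
/- Let τ̄ ∈ ℕ, let p₀,…,p_{τ̄} be real numbers with Σ_{i=0}^{τ̄} pᵢ = 1, and let α₀,…,α_{τ̄} be real numbers. Define β_{i,j} := δ(i−j)·αᵢ²pᵢ − αᵢαⱼpᵢpⱼ for i,j ∈ {0,…,τ̄} (extended by zero outside this range, δ the Kronecker delta), and r(λ) := Σ_{i∈ℤ} β_{i,i+λ} for λ ∈ ℤ. Then for every nonzero complex number z, Σ_{λ=−τ̄}^{τ̄} r(λ)·z^{−λ} = (1/2)·Σ_{i=0}^{τ̄} Σ_{j=0}^{τ̄} (αᵢzⁱ − αⱼzʲ)(αᵢz^{−i} − αⱼz^{−j})·pᵢpⱼ. -/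
/-!
With `aᵢ = αᵢ zⁱ` and `bᵢ = αᵢ z⁻ⁱ`, substituting `j = i + λ` turns the left side into
`∑ᵢⱼ βᵢⱼ z^(i-j) = ∑ᵢⱼ (δᵢⱼ pᵢ - pᵢ pⱼ) aᵢ bⱼ`, the covariance `∑ p a b - (∑ p a)(∑ p b)` of `a` and
`b` under the distribution `p`. Expanding the symmetrised double sum on the right gives
`2 ((∑ p)(∑ p a b) - (∑ p a)(∑ p b))`, and `∑ p = 1`.
-/

open Finset

theorem Finset.sum_Icc_neg_add_eq_sum_Icc_of_eq_zero {M : Type*} [AddCommMonoid M] {τ i : ℤ}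
    (hi : i ∈ Icc 0 τ) (f : ℤ → M) (hf : ∀ j ∉ Icc 0 τ, f j = 0) :
    ∑ lam ∈ Icc (-τ) τ, f (i + lam) = ∑ j ∈ Icc 0 τ, f j := by
  have hshift : ∑ lam ∈ Icc (-τ) τ, f (i + lam) = ∑ j ∈ Icc (i + -τ) (i + τ), f j := by
    rw [← map_add_left_Icc, sum_map]
    rfl
  rw [hshift]
  refine (sum_subset (fun j hj => ?_) fun j _ hj => hf j hj).symm
  simp only [mem_Icc] at hi hj ⊢
  omega

theorem sum_autocorrelation_mul_zpow_neg {K : Type*} [DivisionRing K] (τ : ℤ) (c : ℤ → ℤ → K)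
    (hc : ∀ i j, j ∉ Icc 0 τ → c i j = 0) (z : K) :
    ∑ lam ∈ Icc (-τ) τ, (∑ i ∈ Icc 0 τ, c i (i + lam)) * z ^ (-lam)
      = ∑ i ∈ Icc 0 τ, ∑ j ∈ Icc 0 τ, c i j * z ^ (i - j) := by
  simp only [sum_mul]
  rw [sum_comm]
  refine sum_congr rfl fun i hi => ?_
  rw [← sum_Icc_neg_add_eq_sum_Icc_of_eq_zero hi _ fun j hj => by rw [hc i j hj, zero_mul]]
  simp

theorem Finset.sum_sum_sub_mul_sub_mul_mul {ι R : Type*} [CommRing R] (s : Finset ι)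
    (a b w : ι → R) :
    ∑ i ∈ s, ∑ j ∈ s, (a i - a j) * (b i - b j) * (w i * w j)
      = 2 * ((∑ i ∈ s, w i) * ∑ i ∈ s, w i * a i * b i
        - (∑ i ∈ s, w i * a i) * ∑ i ∈ s, w i * b i) := by
  have hswap : ∑ i ∈ s, ∑ j ∈ s, w i * w j * a j * b j
      = (∑ i ∈ s, w i) * ∑ i ∈ s, w i * a i * b i := by
    rw [sum_mul_sum]; exact sum_congr rfl fun i _ => sum_congr rfl fun j _ => by ring
  have hcross : ∑ i ∈ s, ∑ j ∈ s, w i * w j * a i * b j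
      = (∑ i ∈ s, w i * a i) * ∑ i ∈ s, w i * b i := by
    rw [sum_mul_sum]; exact sum_congr rfl fun i _ => sum_congr rfl fun j _ => by ring
  have hexpand : ∀ i j, (a i - a j) * (b i - b j) * (w i * w j)
      = w j * w i * a i * b i + w i * w j * a j * b j
        - w j * w i * a j * b i - w i * w j * a i * b j := fun i j => by ring
  simp only [hexpand, sum_add_distrib, sum_sub_distrib]
  rw [sum_comm (f := fun i j => w j * w i * a i * b i),
    sum_comm (f := fun i j => w j * w i * a j * b i), hswap, hcross]
  ring

theorem Finset.sum_sum_ite_sub_mul_mul {ι R : Type*} [CommRing R] [DecidableEq ι] (s : Finset ι)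
    (a b w : ι → R) :
    ∑ i ∈ s, ∑ j ∈ s, ((if i = j then w i else 0) - w i * w j) * a i * b j
      = ∑ i ∈ s, w i * a i * b i - (∑ i ∈ s, w i * a i) * ∑ i ∈ s, w i * b i := by
  simp only [sub_mul, sum_sub_distrib, ite_mul, zero_mul, sum_ite_eq, sum_mul_sum]
  congr 1
  · exact sum_congr rfl fun i hi => if_pos hi
  · exact sum_congr rfl fun i _ => sum_congr rfl fun j _ => by ring

/-- Energy spectral density formula of Section 4.1: for the covariance array
`β_{ij} = δ(i−j)αᵢ²pᵢ − αᵢαⱼpᵢpⱼ` of a random-delay channel with `∑pᵢ = 1` and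
autocorrelation `r(λ) = ∑ᵢ β_{i,i+λ}`, one has, for every nonzero complex `z`,
`∑_{λ=−τ̄}^{τ̄} r(λ)z^{−λ} = (1/2)∑ᵢ∑ⱼ(αᵢzⁱ−αⱼzʲ)(αᵢz^{−i}−αⱼz^{−j})pᵢpⱼ`. -/
theorem stmt_17 (τ : ℕ) (p α : ℤ → ℝ)
    (hp : ∑ i ∈ Finset.Icc (0 : ℤ) (τ : ℤ), p i = 1)
    (β : ℤ → ℤ → ℝ)
    (hβ : ∀ i j : ℤ, i ∈ Finset.Icc (0 : ℤ) (τ : ℤ) → j ∈ Finset.Icc (0 : ℤ) (τ : ℤ) →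
      β i j = (if i = j then (1 : ℝ) else 0) * α i ^ 2 * p i - α i * α j * p i * p j)
    (hβzero : ∀ i j : ℤ, i ∉ Finset.Icc (0 : ℤ) (τ : ℤ) ∨ j ∉ Finset.Icc (0 : ℤ) (τ : ℤ) →
      β i j = 0)
    (r : ℤ → ℝ) (hr : ∀ lam : ℤ, r lam = ∑ᶠ i : ℤ, β i (i + lam)) :
    ∀ z : ℂ, z ≠ 0 →
      ∑ lam ∈ Finset.Icc (-(τ : ℤ)) (τ : ℤ), (r lam : ℂ) * z ^ (-lam)
        = (1 / 2 : ℂ) * ∑ i ∈ Finset.Icc (0 : ℤ) (τ : ℤ),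
            ∑ j ∈ Finset.Icc (0 : ℤ) (τ : ℤ),
              ((α i : ℂ) * z ^ i - (α j : ℂ) * z ^ j) *
                ((α i : ℂ) * z ^ (-i) - (α j : ℂ) * z ^ (-j)) *
                ((p i : ℂ) * (p j : ℂ)) := by
  intro z hz
  have hr_sum : ∀ lam, r lam = ∑ i ∈ Icc 0 (τ : ℤ), β i (i + lam) := fun lam =>
    (hr lam).trans <| finsum_eq_sum_of_support_subset _ fun i hi =>
      by_contra fun h => hi (hβzero _ _ (Or.inl h))
  have hp_one : ∑ i ∈ Icc 0 (τ : ℤ), (p i : ℂ) = 1 := by exact_mod_cast hp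
  have hβ_cov : ∀ i ∈ Icc 0 (τ : ℤ), ∀ j ∈ Icc 0 (τ : ℤ), (β i j : ℂ) * z ^ (i - j)
      = ((if i = j then (p i : ℂ) else 0) - p i * p j) * (α i * z ^ i) * (α j * z ^ (-j)) := by
    intro i hi j hj
    rw [hβ i j hi hj]
    split_ifs with h
    · subst h
      push_cast
      rw [sub_self, zpow_zero, zpow_neg]
      field_simp
    · push_cast
      rw [zpow_sub₀ hz, zpow_neg]
      ring
  simp only [hr_sum]
  push_cast
  rw [sum_autocorrelation_mul_zpow_neg _ (fun i j => (β i j : ℂ))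
      (fun i j hj => by simp [hβzero i j (Or.inr hj)]),
    sum_congr rfl fun i hi => sum_congr rfl fun j hj => hβ_cov i hi j hj,
    sum_sum_ite_sub_mul_mul, sum_sum_sub_mul_sub_mul_mul _ (fun i => (α i : ℂ) * z ^ i)
      (fun i => (α i : ℂ) * z ^ (-i)), hp_one]
  ring
end
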